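/- arXiv:quant-ph/0402104 — 6 statements merged into one kernel-verified Lean document; each statement's English description precedes it below -/
import Mathlib

section
/- Let U = U_n ⋯ U_1 be a product of unitary elements U_1, …, U_n of a unital C*-algebra (e.g. bounded operators on a complex Hilbert space), and suppose each factor decomposes as U_i = G_i + B_i where G_i and B_i are arbitrary elements with ‖B_i‖ ≤ ε (so that ‖G_i‖ ≤ 1 + ε). For a subset S ⊆ {1,…,n} let T_S denote the product C_n ⋯ C_1 in which C_i = B_i if i ∈ S and C_i = G_i otherwise, and let 𝐁 = Σ_{|S| ≥ k} T_S be the sum of all terms in the expansion of U containing at least k factors B_i (equivalently, 𝐁 = U_n ⋯ U_1 − Σ_{|S| < k} T_S). Then ‖𝐁‖ ≤ C(n,k) · ε^k · (1+ε)^{n−k}, where C(n,k) is the binomial coefficient. -/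
open Finset

private lemma listprod_range_succ {A : Type*} [Monoid A] (n : ℕ) (f : ℕ → A) :
    ((List.range (n+1)).reverse.map f).prod = f n * ((List.range n).reverse.map f).prod := by
  rw [List.range_succ, List.reverse_append]
  simp

private lemma map_congr_mem {A : Type*} (n : ℕ) (f g : ℕ → A)
    (h : ∀ i < n, f i = g i) :
    (List.range n).reverse.map f = (List.range n).reverse.map g := by
  apply List.map_congr_left
  intro i hi
  exact h i (List.mem_range.mp (List.mem_reverse.mp hi))

private lemma expand_prod {A : Type*} [Ring A] (G B : ℕ → A) : ∀ n : ℕ,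
    ∑ S ∈ (Finset.range n).powerset,
        ((List.range n).reverse.map (fun i => if i ∈ S then B i else G i)).prod
      = ((List.range n).reverse.map (fun i => G i + B i)).prod := by
  intro n
  induction n with
  | zero => simp
  | succ n ih =>
    rw [Finset.range_add_one, Finset.sum_powerset_insert Finset.notMem_range_self,
      listprod_range_succ]
    have h1 : ∀ S ∈ (Finset.range n).powerset,
        ((List.range (n+1)).reverse.map (fun i => if i ∈ S then B i else G i)).prod
        = G n * ((List.range n).reverse.map (fun i => if i ∈ S then B i else G i)).prod := by
      intro S hS
      rw [listprod_range_succ]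
      have hn : n ∉ S := fun h => Finset.notMem_range_self (Finset.mem_powerset.mp hS h)
      rw [if_neg hn]
    have h2 : ∀ S ∈ (Finset.range n).powerset,
        ((List.range (n+1)).reverse.map (fun i => if i ∈ insert n S then B i else G i)).prod
        = B n * ((List.range n).reverse.map (fun i => if i ∈ S then B i else G i)).prod := by
      intro S hS
      rw [listprod_range_succ, if_pos (Finset.mem_insert_self n S)]
      refine congrArg _ (congrArg List.prod (map_congr_mem n _ _ ?_))
      intro i hi
      have hne : i ≠ n := Nat.ne_of_lt hi
      simp [Finset.mem_insert, hne]
    rw [Finset.sum_congr rfl h1, Finset.sum_congr rfl h2, ← Finset.mul_sum, ← Finset.mul_sum,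
      ih, ← add_mul]

private lemma norm_prod_unitaries {A : Type*} [NormedRing A] [StarRing A] [CStarRing A]
    [Nontrivial A] (U : ℕ → A) : ∀ n, (∀ i < n, U i ∈ unitary A) →
    ‖((List.range n).reverse.map U).prod‖ ≤ 1 := by
  intro n
  induction n with
  | zero => simp
  | succ n ih =>
    intro hU
    rw [listprod_range_succ]
    calc ‖U n * ((List.range n).reverse.map U).prod‖
        ≤ ‖U n‖ * ‖((List.range n).reverse.map U).prod‖ := norm_mul_le _ _
      _ ≤ 1 * 1 := by
          apply mul_le_mul _ (ih fun i hi => hU i (hi.trans (Nat.lt_succ_self n)))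
            (norm_nonneg _) zero_le_one
          exact le_of_eq (CStarRing.norm_of_mem_unitary (hU n (Nat.lt_succ_self n)))
      _ = 1 := one_mul 1

/-- **Lemma 1 (first part).**  Let `U = U_n ⋯ U_1` be a product of unitaries in a unital
C*-algebra, with `U i = G i + B i` and `‖B i‖ ≤ ε`.  The sum `𝐁` of all terms in the
expansion of the product containing at least `k` factors `B i` satisfies
`‖𝐁‖ ≤ C(n,k) ε^k (1+ε)^(n-k)`. -/
theorem blemma_general {A : Type*} [NormedRing A] [StarRing A] [CStarRing A]
    [NormedAlgebra ℂ A] [StarModule ℂ A]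
    (n k : ℕ) (hk : k ≤ n) (ε : ℝ) (hε : 0 ≤ ε)
    (U G B : ℕ → A)
    (hU : ∀ i < n, U i ∈ unitary A)
    (hdecomp : ∀ i < n, U i = G i + B i)
    (hB : ∀ i < n, ‖B i‖ ≤ ε) :
    ‖∑ S ∈ (Finset.range n).powerset.filter (fun S => k ≤ S.card),
        ((List.range n).reverse.map (fun i => if i ∈ S then B i else G i)).prod‖
      ≤ (n.choose k : ℝ) * ε ^ k * (1 + ε) ^ (n - k) := by
  rcases subsingleton_or_nontrivial A with hA | hA
  · have h0 : (∑ S ∈ (Finset.range n).powerset.filter (fun S => k ≤ S.card),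
        ((List.range n).reverse.map (fun i => if i ∈ S then B i else G i)).prod) = 0 :=
      Subsingleton.elim _ _
    rw [h0, norm_zero]
    positivity
  clear hk
  induction n generalizing k with
  | zero =>
    cases k with
    | zero => simp
    | succ k =>
      rw [show Finset.filter (fun S => k + 1 ≤ S.card) (Finset.range 0).powerset = ∅ by
        ext S; simp; rintro rfl; simp]
      simp
  | succ n ih =>
    have hU' : ∀ i < n, U i ∈ unitary A := fun i hi => hU i (hi.trans (Nat.lt_succ_self n))
    have hd' : ∀ i < n, U i = G i + B i := fun i hi => hdecomp i (hi.trans (Nat.lt_succ_self n))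
    have hB' : ∀ i < n, ‖B i‖ ≤ ε := fun i hi => hB i (hi.trans (Nat.lt_succ_self n))
    cases k with
    | zero =>
      rw [show Finset.filter (fun S => 0 ≤ S.card) (Finset.range (n+1)).powerset
          = (Finset.range (n+1)).powerset by simp, expand_prod,
        map_congr_mem (n+1) _ U (fun i hi => (hdecomp i hi).symm)]
      simp only [Nat.choose_zero_right, pow_zero, Nat.sub_zero, Nat.cast_one, one_mul, mul_one]
      calc ‖((List.range (n+1)).reverse.map U).prod‖ ≤ 1 := norm_prod_unitaries U (n+1) hU
        _ ≤ (1 + ε) ^ (n+1) := one_le_pow₀ (by linarith)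
    | succ k =>
      -- split the sum
      have hsplit :
          (∑ S ∈ (Finset.range (n+1)).powerset.filter (fun S => k + 1 ≤ S.card),
            ((List.range (n+1)).reverse.map (fun i => if i ∈ S then B i else G i)).prod)
          = G n * (∑ S ∈ (Finset.range n).powerset.filter (fun S => k + 1 ≤ S.card),
              ((List.range n).reverse.map (fun i => if i ∈ S then B i else G i)).prod)
            + B n * (∑ S ∈ (Finset.range n).powerset.filter (fun S => k ≤ S.card),
              ((List.range n).reverse.map (fun i => if i ∈ S then B i else G i)).prod) := by
        rw [Finset.sum_filter, Finset.range_add_one,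
          Finset.sum_powerset_insert Finset.notMem_range_self]
        rw [Finset.mul_sum, Finset.mul_sum, Finset.sum_filter, Finset.sum_filter]
        congr 1
        · apply Finset.sum_congr rfl
          intro S hS
          have hn : n ∉ S := fun h => Finset.notMem_range_self (Finset.mem_powerset.mp hS h)
          rw [listprod_range_succ, if_neg hn]
        · apply Finset.sum_congr rfl
          intro S hS
          have hn : n ∉ S := fun h => Finset.notMem_range_self (Finset.mem_powerset.mp hS h)
          have hcard : (insert n S).card = S.card + 1 := Finset.card_insert_of_notMem hn
          have hprod :
              ((List.range (n+1)).reverse.map (fun i => if i ∈ insert n S then B i else G i)).prod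
              = B n * ((List.range n).reverse.map (fun i => if i ∈ S then B i else G i)).prod := by
            rw [listprod_range_succ, if_pos (Finset.mem_insert_self n S)]
            refine congrArg _ (congrArg List.prod (map_congr_mem n _ _ ?_))
            intro i hi
            have hne : i ≠ n := Nat.ne_of_lt hi
            simp [Finset.mem_insert, hne]
          rw [hcard, hprod]
          have : (k + 1 ≤ S.card + 1) ↔ (k ≤ S.card) := by omega
          split <;> split <;> simp_all
      rw [hsplit]
      have hGn : ‖G n‖ ≤ 1 + ε := by
        have h1 : G n = U n - B n := by rw [hdecomp n (Nat.lt_succ_self n)]; abel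
        rw [h1]
        calc ‖U n - B n‖ ≤ ‖U n‖ + ‖B n‖ := norm_sub_le _ _
          _ ≤ 1 + ε := by
              rw [CStarRing.norm_of_mem_unitary (hU n (Nat.lt_succ_self n))]
              exact add_le_add_right (hB n (Nat.lt_succ_self n)) 1
      have hBn : ‖B n‖ ≤ ε := hB n (Nat.lt_succ_self n)
      have IH1 := ih (k + 1) hU' hd' hB'
      have IH2 := ih k hU' hd' hB'
      calc ‖G n * _ + B n * _‖
          ≤ ‖G n‖ * ‖_‖ + ‖B n‖ * ‖_‖ :=
            (norm_add_le _ _).trans (add_le_add (norm_mul_le _ _) (norm_mul_le _ _))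
        _ ≤ (1 + ε) * ((n.choose (k+1) : ℝ) * ε ^ (k+1) * (1 + ε) ^ (n - (k+1)))
            + ε * ((n.choose k : ℝ) * ε ^ k * (1 + ε) ^ (n - k)) := by
            apply add_le_add
            · exact mul_le_mul hGn IH1 (norm_nonneg _) (by linarith)
            · exact mul_le_mul hBn IH2 (norm_nonneg _) hε
        _ ≤ ((n+1).choose (k+1) : ℝ) * ε ^ (k+1) * (1 + ε) ^ (n + 1 - (k+1)) := by
            have hch : (((n+1).choose (k+1) : ℕ) : ℝ)
                = (n.choose k : ℝ) + (n.choose (k+1) : ℝ) := by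
              rw [Nat.choose_succ_succ]
              push_cast
              ring
            have hsub : n + 1 - (k + 1) = n - k := by omega
            rw [hch, hsub]
            rcases Nat.lt_or_ge k n with hkn | hkn
            · have h2 : n - k = n - (k+1) + 1 := by omega
              rw [h2, pow_succ]
              apply le_of_eq
              ring
            · have hc : n.choose (k+1) = 0 := Nat.choose_eq_zero_of_lt (by omega)
              rcases Nat.lt_or_ge n k with hnk | hnk
              · have hc2 : n.choose k = 0 := Nat.choose_eq_zero_of_lt hnk
                simp [hc, hc2]
              · have hkeq : k = n := le_antisymm hnk hkn
                subst hkeq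
                simp only [hc, Nat.choose_self, Nat.cast_zero, Nat.cast_one, Nat.sub_self,
                  pow_zero, mul_zero, zero_mul, mul_one, one_mul, add_zero, zero_add]
                rw [pow_succ]
                apply le_of_eq
                ring
end

section
/- Let U = U_n ⋯ U_1 be a product of unitary elements U_1, …, U_n of a unital C*-algebra, and suppose each factor decomposes as U_i = G_i + B_i where each G_i is unitary and ‖B_i‖ ≤ ε. For a subset S ⊆ {1,…,n} let T_S denote the product C_n ⋯ C_1 in which C_i = B_i if i ∈ S and C_i = G_i otherwise, and let 𝐁 = Σ_{|S| ≥ k} T_S be the sum of all terms in the expansion of U containing at least k factors B_i. Then ‖𝐁‖ ≤ C(n,k) · ε^k, where C(n,k) is the binomial coefficient. -/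
/-!
Splitting off the last factor gives `𝐁(n+1, k) = G_n 𝐁(n, k) + B_n 𝐁(n, k-1)`. Left
multiplication by the unitary `G_n` is isometric, so for `k ≥ 1` the bounds obey Pascal's rule
`C(n+1, k+1) ε^(k+1) = C(n, k+1) ε^(k+1) + ε · C(n, k) ε^k`. For `k = 0` the sum is the whole
product `U_n ⋯ U_1`, which is unitary and so has norm at most `1`.
-/

open Finset

section Expansion

variable {A : Type*} [Semiring A] (G B : ℕ → A)

def expansionTerm (n : ℕ) (S : Finset ℕ) : A :=
  ((List.range n).reverse.map (fun i => if i ∈ S then B i else G i)).prod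

def expansionTail (n k : ℕ) : A :=
  ∑ S ∈ (range n).powerset.filter (fun S => k ≤ S.card), expansionTerm G B n S

lemma expansionTerm_succ (n : ℕ) (S : Finset ℕ) :
    expansionTerm G B (n + 1) S = (if n ∈ S then B n else G n) * expansionTerm G B n S := by
  simp [expansionTerm, List.range_succ]

lemma expansionTerm_insert_self (n : ℕ) (S : Finset ℕ) :
    expansionTerm G B n (insert n S) = expansionTerm G B n S := by
  unfold expansionTerm
  congr 1
  refine List.map_congr_left fun i hi => ?_
  have : i ≠ n := (List.mem_range.mp (List.mem_reverse.mp hi)).ne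
  simp [this]

lemma expansionTail_succ (n k : ℕ) :
    expansionTail G B (n + 1) k =
      G n * expansionTail G B n k + B n * expansionTail G B n (k - 1) := by
  have hn : n ∉ range n := by simp
  simp only [expansionTail, sum_filter, range_add_one, sum_powerset_insert hn, mul_sum]
  congr 1 <;> refine sum_congr rfl fun S hS => ?_
  · have hnS : n ∉ S := fun h => hn (mem_powerset.mp hS h)
    rw [expansionTerm_succ, if_neg hnS, mul_ite, mul_zero]
  · have hnS : n ∉ S := fun h => hn (mem_powerset.mp hS h)
    rw [expansionTerm_succ, if_pos (mem_insert_self n S), expansionTerm_insert_self,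
      card_insert_of_notMem hnS, mul_ite, mul_zero]
    simp only [Nat.sub_le_iff_le_add]

lemma expansionTail_zero (n : ℕ) :
    expansionTail G B n 0 = ((List.range n).reverse.map (fun i => G i + B i)).prod := by
  induction n with
  | zero => simp [expansionTail, expansionTerm]
  | succ n ih => simp [expansionTail_succ, ih, List.range_succ, add_mul]

end Expansion

lemma CStarRing.norm_le_one_of_mem_unitary {E : Type*} [NormedRing E] [StarRing E] [CStarRing E]
    {U : E} (hU : U ∈ unitary E) : ‖U‖ ≤ 1 := by
  rcases subsingleton_or_nontrivial E with _ | _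
  · simp [Subsingleton.elim U 0]
  · exact (CStarRing.norm_of_mem_unitary hU).le

section Norm

variable {A : Type*} [NormedRing A] [StarRing A] [CStarRing A] {U G B : ℕ → A} {n : ℕ}

lemma norm_expansionTail_zero_le (hU : ∀ i < n, U i ∈ unitary A)
    (hdecomp : ∀ i < n, U i = G i + B i) : ‖expansionTail G B n 0‖ ≤ 1 := by
  rw [expansionTail_zero]
  refine CStarRing.norm_le_one_of_mem_unitary (Submonoid.list_prod_mem _ fun x hx => ?_)
  obtain ⟨i, hi, rfl⟩ := List.mem_map.mp hx
  have hin : i < n := List.mem_range.mp (List.mem_reverse.mp hi)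
  exact hdecomp i hin ▸ hU i hin

theorem norm_expansionTail_le {ε : ℝ} (hε : 0 ≤ ε)
    (hU : ∀ i < n, U i ∈ unitary A) (hG : ∀ i < n, G i ∈ unitary A)
    (hdecomp : ∀ i < n, U i = G i + B i) (hB : ∀ i < n, ‖B i‖ ≤ ε) (k : ℕ) :
    ‖expansionTail G B n k‖ ≤ n.choose k * ε ^ k := by
  induction n generalizing k with
  | zero =>
    cases k with
    | zero => simpa using norm_expansionTail_zero_le hU hdecomp
    | succ k => simp [expansionTail, filter_singleton]
  | succ n ih =>
    have ih := ih (fun i hi => hU i (by omega)) (fun i hi => hG i (by omega))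
      (fun i hi => hdecomp i (by omega)) (fun i hi => hB i (by omega))
    cases k with
    | zero => simpa using norm_expansionTail_zero_le hU hdecomp
    | succ k =>
      calc ‖expansionTail G B (n + 1) (k + 1)‖
          ≤ ‖G n * expansionTail G B n (k + 1)‖ + ‖B n * expansionTail G B n k‖ := by
            rw [expansionTail_succ]
            exact norm_add_le _ _
        _ ≤ ‖expansionTail G B n (k + 1)‖ + ‖B n‖ * ‖expansionTail G B n k‖ := by
            rw [CStarRing.norm_mem_unitary_mul _ (hG n n.lt_succ_self)]
            gcongr
            exact norm_mul_le _ _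
        _ ≤ n.choose (k + 1) * ε ^ (k + 1) + ε * (n.choose k * ε ^ k) := by
            gcongr
            exacts [ih (k + 1), hB n n.lt_succ_self, ih k]
        _ = (n + 1).choose (k + 1) * ε ^ (k + 1) := by
            rw [Nat.choose_succ_succ']
            push_cast
            ring

end Norm

open Finset in
theorem blemma_unitary_general {A : Type*} [NormedRing A] [StarRing A] [CStarRing A]
    (n k : ℕ) (ε : ℝ) (hε : 0 ≤ ε)
    (U G B : ℕ → A)
    (hU : ∀ i < n, U i ∈ unitary A)
    (hG : ∀ i < n, G i ∈ unitary A)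
    (hdecomp : ∀ i < n, U i = G i + B i)
    (hB : ∀ i < n, ‖B i‖ ≤ ε) :
    ‖∑ S ∈ (Finset.range n).powerset.filter (fun S => k ≤ S.card),
        ((List.range n).reverse.map (fun i => if i ∈ S then B i else G i)).prod‖
      ≤ (n.choose k : ℝ) * ε ^ k :=
  norm_expansionTail_le hε hU hG hdecomp hB k

open Finset in
/-- **Lemma 1 (second part).**  Let `U = U_n ⋯ U_1` be a product of unitaries in a unital
C*-algebra, with `U i = G i + B i`, each `G i` unitary and `‖B i‖ ≤ ε`.  The sum `𝐁` of
all terms in the expansion of the product containing at least `k` factors `B i` satisfies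
`‖𝐁‖ ≤ C(n,k) ε^k`. -/
theorem blemma_unitary {A : Type*} [NormedRing A] [StarRing A] [CStarRing A]
    [NormedAlgebra ℂ A] [StarModule ℂ A]
    (n k : ℕ) (hk : k ≤ n) (ε : ℝ) (hε : 0 ≤ ε)
    (U G B : ℕ → A)
    (hU : ∀ i < n, U i ∈ unitary A)
    (hG : ∀ i < n, G i ∈ unitary A)
    (hdecomp : ∀ i < n, U i = G i + B i)
    (hB : ∀ i < n, ‖B i‖ ≤ ε) :
    ‖∑ S ∈ (Finset.range n).powerset.filter (fun S => k ≤ S.card),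
        ((List.range n).reverse.map (fun i => if i ∈ S then B i else G i)).prod‖
      ≤ (n.choose k : ℝ) * ε ^ k :=
  blemma_unitary_general n k ε hε U G B hU hG hdecomp hB
end

section
/- Let θ_1, …, θ_n be real numbers all lying in an interval [a, b] with b − a ≤ π, and let p_1, …, p_n be nonnegative reals with Σ_j p_j = 1. Then |Σ_j p_j · exp(i θ_j)| ≥ cos((b − a)/2). (This is the key geometric fact showing that a convex combination of points on an arc of the unit circle of angular width at most π has modulus at least the distance from the origin to the chord joining the arc's endpoints.) -/
/-!
Rotate the sum by `exp (-i c)`, where `c = (a + b) / 2` is the midpoint of the arc. Each rotated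
point `exp (i (θ_j - c))` has real part `cos (θ_j - c) ≥ cos ((b - a) / 2)`, since
`|θ_j - c| ≤ (b - a) / 2 ≤ π / 2`; so the real part of the rotated convex combination, and a
fortiori its modulus, is at least `cos ((b - a) / 2)`.
-/

open Complex

theorem Real.cos_le_cos_of_abs_le {x δ : ℝ} (hx : |x| ≤ δ) (hδ : δ ≤ Real.pi) :
    Real.cos δ ≤ Real.cos x := by
  rw [← Real.cos_abs x]
  exact Real.cos_le_cos_of_nonneg_of_le_pi (abs_nonneg x) hδ hx

theorem Finset.le_sum_mul_of_forall_le {ι : Type*} (s : Finset ι) {p f : ι → ℝ} {m : ℝ}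
    (hp : ∀ j ∈ s, 0 ≤ p j) (hsum : ∑ j ∈ s, p j = 1) (hf : ∀ j ∈ s, m ≤ f j) :
    m ≤ ∑ j ∈ s, p j * f j :=
  calc m = ∑ j ∈ s, p j * m := by rw [← Finset.sum_mul, hsum, one_mul]
    _ ≤ ∑ j ∈ s, p j * f j :=
      Finset.sum_le_sum fun j hj => mul_le_mul_of_nonneg_left (hf j hj) (hp j hj)

theorem re_sum_mul_exp_mul_exp_neg {ι : Type*} (s : Finset ι) (θ p : ι → ℝ) (c : ℝ) :
    ((∑ j ∈ s, (p j : ℂ) * exp (I * θ j)) * exp (I * (-c : ℝ))).re =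
      ∑ j ∈ s, p j * Real.cos (θ j - c) := by
  rw [Finset.sum_mul, re_sum]
  refine Finset.sum_congr rfl fun j _ => ?_
  have hrot : exp (I * θ j) * exp (I * (-c : ℝ)) = exp ((θ j - c : ℝ) * I) := by
    rw [← exp_add]; push_cast; ring_nf
  rw [mul_assoc, hrot, re_ofReal_mul, exp_ofReal_mul_I_re]

theorem cos_le_norm_sum_mul_exp {ι : Type*} (s : Finset ι) (θ p : ι → ℝ) {c δ : ℝ}
    (hδ : δ ≤ Real.pi) (hθ : ∀ j ∈ s, |θ j - c| ≤ δ)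
    (hp : ∀ j ∈ s, 0 ≤ p j) (hsum : ∑ j ∈ s, p j = 1) :
    Real.cos δ ≤ ‖∑ j ∈ s, (p j : ℂ) * exp (I * θ j)‖ :=
  calc Real.cos δ ≤ ∑ j ∈ s, p j * Real.cos (θ j - c) :=
        s.le_sum_mul_of_forall_le hp hsum fun j hj => Real.cos_le_cos_of_abs_le (hθ j hj) hδ
    _ = ((∑ j ∈ s, (p j : ℂ) * exp (I * θ j)) * exp (I * (-c : ℝ))).re :=
        (re_sum_mul_exp_mul_exp_neg s θ p c).symm
    _ ≤ ‖(∑ j ∈ s, (p j : ℂ) * exp (I * θ j)) * exp (I * (-c : ℝ))‖ := re_le_norm _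
    _ = ‖∑ j ∈ s, (p j : ℂ) * exp (I * θ j)‖ := by rw [norm_mul, norm_exp_I_mul_ofReal, mul_one]

open scoped Real in
theorem convex_combination_arc_general (n : ℕ) (θ p : Fin n → ℝ) (a b : ℝ)
    (hwidth : b - a ≤ π)
    (hθ : ∀ j, θ j ∈ Set.Icc a b)
    (hp : ∀ j, 0 ≤ p j) (hsum : ∑ j, p j = 1) :
    Real.cos ((b - a) / 2) ≤
      ‖∑ j, (p j : ℂ) * Complex.exp (Complex.I * (θ j : ℂ))‖ := by
  have hθ_mid : ∀ j ∈ Finset.univ, |θ j - (a + b) / 2| ≤ (b - a) / 2 := fun j _ => by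
    obtain ⟨hja, hjb⟩ := hθ j
    rw [abs_le]; constructor <;> linarith
  exact cos_le_norm_sum_mul_exp Finset.univ θ p (by linarith [Real.pi_pos]) hθ_mid
    (fun j _ => hp j) hsum

open scoped Real in
/-- **Convex combinations on a circular arc.**  If `θ_1, …, θ_n ∈ [a, b]` with
`b - a ≤ π` and `p` is a probability vector, then
`|Σ_j p_j exp(i θ_j)| ≥ cos ((b - a)/2)`. -/
theorem convex_combination_arc (n : ℕ) (θ p : Fin n → ℝ) (a b : ℝ)
    (hab : a ≤ b) (hwidth : b - a ≤ π)
    (hθ : ∀ j, θ j ∈ Set.Icc a b)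
    (hp : ∀ j, 0 ≤ p j) (hsum : ∑ j, p j = 1) :
    Real.cos ((b - a) / 2) ≤
      ‖∑ j, (p j : ℂ) * Complex.exp (Complex.I * (θ j : ℂ))‖ :=
  convex_combination_arc_general n θ p a b hwidth hθ hp hsum
end

section
/- Fix an integer A ≥ 2 and set c = e·A·(A−1)/2, where e is the base of the natural logarithm. Let (x_r)_{r ≥ 1} be a sequence of nonnegative reals satisfying x_1 ≤ η for some η with 0 ≤ η ≤ 1/(e·A·(A−1)), and satisfying the recurrence x_{r+1} ≤ (A(A−1)/2) · x_r² · (1 + x_r)^{A−2} for all r ≥ 1. Then for every r ≥ 1, x_r ≤ (1/c) · (c·η)^{2^{r−1}}; in particular, since c·η ≤ 1/2, the sequence x_r decays doubly exponentially in r to 0. (This is the solution of the recurrence ‖R_B^r‖ ≤ C(A_C,2)·‖R_B^{r−1}‖²·(1+‖R_B^{r−1}‖)^{A_C−2} governing the norm of the bad part of an r-rectangle, and yields the critical threshold value (λ₀ t₀)_c = 1/(e·A_C·(A_C−1)).) -/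
/-- **Solution of the bad-rectangle recurrence (Eqs. (23)-(24)).**
Fix `A ≥ 2`, set `c = e A(A-1)/2`, and let `(x_r)` be a nonnegative sequence with
`x_1 ≤ η ≤ 1/(e A(A-1))` and `x_{r+1} ≤ C(A,2) x_r² (1+x_r)^{A-2}`.  Then
`x_r ≤ (1/c) (c η)^{2^{r-1}}` for all `r ≥ 1`, exhibiting the threshold
`(λ₀ t₀)_c = 1/(e A(A-1))`. -/
theorem bad_recurrence_solution (A : ℕ) (hA : 2 ≤ A) (η : ℝ) (hη0 : 0 ≤ η)
    (hη : η ≤ 1 / (Real.exp 1 * A * ((A : ℝ) - 1)))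
    (x : ℕ → ℝ) (hx0 : ∀ r, 1 ≤ r → 0 ≤ x r) (hx1 : x 1 ≤ η)
    (hrec : ∀ r, 1 ≤ r →
      x (r + 1) ≤ ((A : ℝ) * ((A : ℝ) - 1) / 2) * (x r) ^ 2 * (1 + x r) ^ (A - 2)) :
    ∀ r, 1 ≤ r →
      x r ≤ (1 / (Real.exp 1 * A * ((A : ℝ) - 1) / 2)) *
        ((Real.exp 1 * A * ((A : ℝ) - 1) / 2) * η) ^ (2 ^ (r - 1)) := by
  set c := Real.exp 1 * A * ((A : ℝ) - 1) / 2 with hc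
  have hA2 : (2:ℝ) ≤ (A:ℝ) := by exact_mod_cast hA
  have he2 : (2:ℝ) ≤ Real.exp 1 := by have := Real.add_one_le_exp 1; linarith
  have hcpos : 0 < c := by
    rw [hc]
    apply div_pos _ (by norm_num)
    apply mul_pos (by positivity)
    linarith
  have h2c : Real.exp 1 * A * ((A : ℝ) - 1) = 2 * c := by rw [hc]; ring
  have hcη : c * η ≤ 1/2 := by
    rw [h2c] at hη
    calc c * η ≤ c * (1 / (2 * c)) := mul_le_mul_of_nonneg_left hη hcpos.le
      _ = 1/2 := by field_simp
  have hcη0 : 0 ≤ c * η := by positivity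
  have hAA0 : (0:ℝ) ≤ (A:ℝ) * ((A:ℝ) - 1) := by nlinarith
  intro r hr
  induction r, hr using Nat.le_induction with
  | base =>
      simp only [Nat.sub_self, pow_zero, pow_one]
      rw [one_div, inv_mul_cancel_left₀ (ne_of_gt hcpos)]
      exact hx1
  | succ n hn ih =>
      have hxn0 : 0 ≤ x n := hx0 n hn
      have hB0 : (0:ℝ) ≤ (1 / c) * (c * η) ^ (2 ^ (n - 1)) := by positivity
      -- bound ≤ 1/(2c)
      have hBle : (1 / c) * (c * η) ^ (2 ^ (n - 1)) ≤ 1 / (2 * c) := by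
        have h1 : (c * η) ^ (2 ^ (n - 1)) ≤ (1/2) ^ (2 ^ (n - 1)) :=
          pow_le_pow_left₀ hcη0 hcη _
        have h2 : ((1:ℝ)/2) ^ (2 ^ (n - 1)) ≤ (1:ℝ)/2 := by
          have := pow_le_pow_of_le_one (by norm_num : (0:ℝ) ≤ 1/2) (by norm_num)
            (Nat.one_le_two_pow (n := n - 1))
          simpa using this
        calc (1/c) * (c*η)^(2^(n-1)) ≤ (1/c) * (1/2) :=
              mul_le_mul_of_nonneg_left (h1.trans h2) (by positivity)
          _ = 1 / (2*c) := by rw [div_mul_div_comm, one_mul, mul_comm]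
      have hxB : x n ≤ 1 / (2 * c) := ih.trans hBle
      -- (1+x n)^(A-2) ≤ e
      have hpow : (1 + x n) ^ (A - 2) ≤ Real.exp 1 := by
        have h1 : (1 + x n) ^ (A - 2) ≤ (Real.exp (x n)) ^ (A - 2) := by
          apply pow_le_pow_left₀ (by linarith)
          have := Real.add_one_le_exp (x n); linarith
        have h2 : (Real.exp (x n)) ^ (A - 2) = Real.exp ((A - 2 : ℕ) * x n) := by
          rw [← Real.exp_nat_mul]
        have hcast : ((A - 2 : ℕ) : ℝ) = (A : ℝ) - 2 := by push_cast [hA]; ring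
        have hA22 : (A:ℝ) - 2 ≤ 2 * c := by
          rw [← h2c]
          have h4 : 2 * ((A:ℝ) * ((A:ℝ) - 1)) ≤ Real.exp 1 * ((A:ℝ) * ((A:ℝ) - 1)) :=
            mul_le_mul_of_nonneg_right he2 hAA0
          nlinarith
        have h3 : ((A - 2 : ℕ) : ℝ) * x n ≤ 1 := by
          rw [hcast]
          have hxc : x n * (2 * c) ≤ 1 := by
            rw [← le_div_iff₀ (by positivity)]; exact hxB
          nlinarith
        calc (1 + x n) ^ (A - 2) ≤ Real.exp ((A - 2 : ℕ) * x n) := by rw [← h2]; exact h1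
          _ ≤ Real.exp 1 := Real.exp_le_exp.mpr h3
      have hstep : x (n+1) ≤ ((A : ℝ) * ((A : ℝ) - 1) / 2) *
          ((1 / c) * (c * η) ^ (2 ^ (n - 1))) ^ 2 * Real.exp 1 := by
        calc x (n+1) ≤ ((A : ℝ) * ((A : ℝ) - 1) / 2) * (x n) ^ 2 * (1 + x n) ^ (A - 2) :=
              hrec n hn
          _ ≤ ((A : ℝ) * ((A : ℝ) - 1) / 2) *
                ((1 / c) * (c * η) ^ (2 ^ (n - 1))) ^ 2 * (1 + x n) ^ (A - 2) := by
              apply mul_le_mul_of_nonneg_right _ (by positivity)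
              apply mul_le_mul_of_nonneg_left _ (by linarith)
              exact pow_le_pow_left₀ hxn0 ih 2
          _ ≤ _ := mul_le_mul_of_nonneg_left hpow
              (by apply mul_nonneg (by linarith) (sq_nonneg _))
      have hexp2 : 2 ^ (n - 1) * 2 = 2 ^ n := by
        rw [← pow_succ, Nat.sub_add_cancel hn]
      have ht : ((c * η) ^ (2 ^ (n - 1))) ^ 2 = (c * η) ^ (2 ^ n) := by
        rw [← pow_mul, hexp2]
      have hkey : ((A : ℝ) * ((A : ℝ) - 1) / 2) *
          ((1 / c) * (c * η) ^ (2 ^ (n - 1))) ^ 2 * Real.exp 1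
          = (1 / c) * (c * η) ^ (2 ^ ((n+1) - 1)) := by
        have hcc : c * (1/c)^2 = 1/c := by field_simp
        simp only [Nat.add_sub_cancel]
        calc ((A : ℝ) * ((A : ℝ) - 1) / 2) *
              ((1 / c) * (c * η) ^ (2 ^ (n - 1))) ^ 2 * Real.exp 1
            = (Real.exp 1 * A * ((A:ℝ)-1) / 2) * ((1/c)^2 * (c*η)^(2^n)) := by
              rw [mul_pow, ht]; ring
          _ = c * (1/c)^2 * (c*η)^(2^n) := by rw [← hc]; ring
          _ = (1/c) * (c*η)^(2^n) := by rw [hcc]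
      exact hstep.trans_eq hkey
end

section
/- Let V be a complex inner product space, let I be a finite index set, and for each i ∈ I let a_i, b_i : V → V be linear maps satisfying ⟨a_i v, w⟩ = ⟨v, b_i w⟩ for all v, w ∈ V and a_i(b_i v) − b_i(a_i v) = v for all v ∈ V. Let c_i ∈ ℂ and ω_i > 0 for each i ∈ I. Then for every unit vector ψ ∈ V, Σ_{i∈I} |c_i| · (‖a_i ψ‖ + ‖b_i ψ‖) ≤ 2·√( (Σ_{i∈I} |c_i|²/ω_i) · (Σ_{i∈I} ω_i(‖a_i ψ‖² + 1/2)) ). (With H_{B_i} = ω_i(a_i† a_i + 1/2) this is the bound ‖H_int ψ‖ ≤ Σ_i |c_i|(‖a_i ψ‖+‖a_i† ψ‖) ≤ 2√(⟨H_B⟩_ψ · Σ_i |c_i|²/ω_i) for the spin-boson interaction Hamiltonian, obtained via the Cauchy–Schwarz inequality.) -/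
/-!
For each mode, `[a, b] = 1` together with `b = a†` gives `‖b ψ‖² = ‖a ψ‖² + ‖ψ‖²`, so
`(‖a ψ‖ + ‖b ψ‖)² ≤ 2 (‖a ψ‖² + ‖b ψ‖²) = 4 (‖a ψ‖² + ‖ψ‖² / 2)`. Splitting
`|c_i| s_i = (|c_i| / √ω_i) (√ω_i s_i)` and applying Cauchy–Schwarz over the modes yields the bound.
-/

open Finset

theorem Finset.sum_mul_le_sqrt_sum_sq_div_mul_sum_mul_sq {ι : Type*} (s : Finset ι)
    (u v w : ι → ℝ) (hw : ∀ i ∈ s, 0 < w i) :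
    ∑ i ∈ s, u i * v i ≤ √((∑ i ∈ s, u i ^ 2 / w i) * ∑ i ∈ s, w i * v i ^ 2) := by
  refine (le_abs_self _).trans (Real.abs_le_sqrt ?_)
  refine sum_sq_le_sum_mul_sum_of_sq_le_mul s (fun i hi => by have := hw i hi; positivity)
    (fun i hi => by have := hw i hi; positivity) fun i hi => le_of_eq ?_
  field_simp [(hw i hi).ne']

section CanonicalCommutation

variable {𝕜 V : Type*} [RCLike 𝕜] [NormedAddCommGroup V] [InnerProductSpace 𝕜 V]
  {a b : V →ₗ[𝕜] V}

theorem norm_sq_eq_norm_sq_add_norm_sq_of_commutator_eq_id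
    (hadj : ∀ v w : V, inner 𝕜 (a v) w = inner 𝕜 v (b w))
    (hccr : ∀ v : V, a (b v) - b (a v) = v) (ψ : V) :
    ‖b ψ‖ ^ 2 = ‖a ψ‖ ^ 2 + ‖ψ‖ ^ 2 := by
  have hab : a (b ψ) = b (a ψ) + ψ := eq_add_of_sub_eq' (hccr ψ)
  have hba : inner 𝕜 (b (a ψ)) ψ = (starRingEnd 𝕜) (inner 𝕜 (a ψ) (a ψ)) := by
    rw [hadj, inner_conj_symm]
  rw [← inner_self_eq_norm_sq (𝕜 := 𝕜), ← hadj, hab, inner_add_left, map_add, hba,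
    RCLike.conj_re, inner_self_eq_norm_sq, inner_self_eq_norm_sq]

theorem add_norm_sq_le_of_commutator_eq_id
    (hadj : ∀ v w : V, inner 𝕜 (a v) w = inner 𝕜 v (b w))
    (hccr : ∀ v : V, a (b v) - b (a v) = v) (ψ : V) :
    (‖a ψ‖ + ‖b ψ‖) ^ 2 ≤ 4 * (‖a ψ‖ ^ 2 + ‖ψ‖ ^ 2 / 2) := by
  have hb := norm_sq_eq_norm_sq_add_norm_sq_of_commutator_eq_id hadj hccr ψ
  nlinarith [sq_nonneg (‖a ψ‖ - ‖b ψ‖)]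

end CanonicalCommutation

/-- **Cauchy–Schwarz bound for the spin-boson interaction (Eqs. (28)-(29)).**
For finitely many modes with annihilation/creation pairs `(a_i, b_i)` satisfying
`⟨a_i v, w⟩ = ⟨v, b_i w⟩` and `[a_i, b_i] = 1`, coupling constants `c_i` and frequencies
`ω_i > 0`, every unit vector `ψ` satisfies
`Σ_i |c_i| (‖a_i ψ‖ + ‖b_i ψ‖) ≤ 2 √((Σ_i |c_i|²/ω_i) (Σ_i ω_i (‖a_i ψ‖² + 1/2)))`. -/
theorem spin_boson_bound {V : Type*} [NormedAddCommGroup V] [InnerProductSpace ℂ V]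
    {ι : Type*} (I : Finset ι)
    (a b : ι → V →ₗ[ℂ] V) (c : ι → ℂ) (ω : ι → ℝ)
    (hω : ∀ i ∈ I, 0 < ω i)
    (hadj : ∀ i ∈ I, ∀ v w : V, (inner ℂ (a i v) w : ℂ) = inner ℂ v (b i w))
    (hccr : ∀ i ∈ I, ∀ v : V, a i (b i v) - b i (a i v) = v)
    (ψ : V) (hψ : ‖ψ‖ = 1) :
    ∑ i ∈ I, ‖c i‖ * (‖a i ψ‖ + ‖b i ψ‖) ≤
      2 * Real.sqrt ((∑ i ∈ I, ‖c i‖ ^ 2 / ω i) *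
        (∑ i ∈ I, ω i * (‖a i ψ‖ ^ 2 + 1 / 2))) := by
  have hmode : ∀ i ∈ I,
      ω i * (‖a i ψ‖ + ‖b i ψ‖) ^ 2 ≤ 2 ^ 2 * (ω i * (‖a i ψ‖ ^ 2 + 1 / 2)) := by
    intro i hi
    have := add_norm_sq_le_of_commutator_eq_id (hadj i hi) (hccr i hi) ψ
    rw [hψ] at this
    nlinarith [hω i hi]
  have hC : 0 ≤ ∑ i ∈ I, ‖c i‖ ^ 2 / ω i :=
    sum_nonneg fun i hi => div_nonneg (sq_nonneg _) (hω i hi).le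
  calc ∑ i ∈ I, ‖c i‖ * (‖a i ψ‖ + ‖b i ψ‖)
      ≤ √((∑ i ∈ I, ‖c i‖ ^ 2 / ω i) * ∑ i ∈ I, ω i * (‖a i ψ‖ + ‖b i ψ‖) ^ 2) :=
        I.sum_mul_le_sqrt_sum_sq_div_mul_sum_mul_sq _ _ ω hω
    _ ≤ √((∑ i ∈ I, ‖c i‖ ^ 2 / ω i) * (2 ^ 2 * ∑ i ∈ I, ω i * (‖a i ψ‖ ^ 2 + 1 / 2))) :=
        Real.sqrt_le_sqrt <| mul_le_mul_of_nonneg_left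
          ((sum_le_sum hmode).trans_eq (mul_sum _ _ _).symm) hC
    _ = 2 * √((∑ i ∈ I, ‖c i‖ ^ 2 / ω i) * ∑ i ∈ I, ω i * (‖a i ψ‖ ^ 2 + 1 / 2)) := by
        rw [mul_left_comm, Real.sqrt_mul (by norm_num), Real.sqrt_sq zero_le_two]
end

section
/- For all real β > 0 and ω_c > 0, the improper integral ∫₀^∞ ω · exp(−ω/ω_c) · coth(β ω / 2) dω converges and equals −ω_c² + (2/β²) · Σ_{n=0}^∞ 1/(n + 1/(β ω_c))², where the series is the trigamma function Ψ′ evaluated at 1/(β ω_c). (This is the closed-form evaluation, for an Ohmic spectral density J(ω) = α ω e^{−ω/ω_c}, of the thermal bound ∫₀^∞ J(ω) coth(β ω/2) dω = α(−ω_c² + 2Ψ′(1/(β ω_c))/β²) entering the cooling-assumption estimate of ‖H_int ψ‖.) -/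
open MeasureTheory

lemma integrableOn_id_mul_exp {r : ℝ} (hr : 0 < r) :
    IntegrableOn (fun t : ℝ => t * Real.exp (-(r * t))) (Set.Ioi 0) := by
  have h := integrableOn_rpow_mul_exp_neg_mul_rpow (p := 1) (s := 1) (b := r)
    (by norm_num) one_pos hr
  refine h.congr_fun (fun t ht => ?_) measurableSet_Ioi
  simp [Real.rpow_one, neg_mul]

lemma integral_id_mul_exp {r : ℝ} (hr : 0 < r) :
    ∫ t in Set.Ioi (0:ℝ), t * Real.exp (-(r * t)) = 1 / r ^ 2 := by
  have h := Real.integral_rpow_mul_exp_neg_mul_Ioi (a := 2) (r := r) two_pos hr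
  rw [Real.Gamma_two, mul_one] at h
  have h2 : ((1:ℝ)/r) ^ (2:ℝ) = 1 / r ^ 2 := by
    rw [show (2:ℝ) = ((2:ℕ):ℝ) by norm_num, Real.rpow_natCast, div_pow, one_pow]
  rw [h2] at h
  rw [← h]
  refine setIntegral_congr_fun measurableSet_Ioi (fun t ht => ?_)
  norm_num

lemma coth_tsum {x : ℝ} (hx : 0 < x) :
    Real.cosh x / Real.sinh x = 1 + 2 * ∑' n : ℕ, Real.exp (-(2 * x)) ^ (n + 1) := by
  have hs : 0 < Real.sinh x := Real.sinh_pos_iff.mpr hx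
  have hr1 : Real.exp (-(2 * x)) < 1 := Real.exp_lt_one_iff.mpr (by linarith)
  have hr0 : (0:ℝ) ≤ Real.exp (-(2 * x)) := (Real.exp_pos _).le
  have hsum : ∑' n : ℕ, Real.exp (-(2 * x)) ^ (n + 1)
      = Real.exp (-(2 * x)) / (1 - Real.exp (-(2 * x))) := by
    simp_rw [pow_succ']
    rw [tsum_mul_left, tsum_geometric_of_lt_one hr0 hr1, div_eq_mul_inv]
  rw [hsum]
  have hu := Real.exp_pos x
  have hv := Real.exp_pos (-x)
  have huv : Real.exp x * Real.exp (-x) = 1 := by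
    rw [← Real.exp_add]; simp
  have hvv : Real.exp (-(2*x)) = Real.exp (-x) * Real.exp (-x) := by
    rw [← Real.exp_add]; ring_nf
  have hvlt : Real.exp (-x) < Real.exp x := Real.exp_lt_exp.mpr (by linarith)
  have hd : (0:ℝ) < (Real.exp x - Real.exp (-x)) / 2 := by linarith
  rw [Real.cosh_eq, Real.sinh_eq, hvv]
  rw [div_eq_iff hd.ne']
  have hne : 1 - Real.exp (-x) * Real.exp (-x) ≠ 0 := by
    nlinarith [Real.exp_lt_one_iff.mpr (neg_lt_zero.mpr hx)]
  have hne' : 1 - Real.exp (-x) ^ 2 ≠ 0 := by rw [sq]; exact hne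
  field_simp
  nlinarith [huv]

lemma coth_le {x : ℝ} (hx : 0 < x) :
    Real.cosh x / Real.sinh x ≤ 1 + 1 / x := by
  have hs : 0 < Real.sinh x := Real.sinh_pos_iff.mpr hx
  rw [show (1:ℝ) + 1/x = (x+1)/x by field_simp, div_le_div_iff₀ hs hx]
  have h1 : 2 * x + 1 ≤ Real.exp (2 * x) := by
    have := Real.add_one_le_exp (2 * x); linarith
  have huv : Real.exp x * Real.exp (-x) = 1 := by rw [← Real.exp_add]; simp
  have h2 : Real.exp (2*x) = Real.exp x * Real.exp x := by rw [← Real.exp_add]; ring_nf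
  have hv := Real.exp_pos (-x)
  rw [Real.cosh_eq, Real.sinh_eq]
  rw [h2] at h1
  nlinarith [mul_le_mul_of_nonneg_right h1 hv.le, huv]

lemma summable_shift {c : ℝ} (hc : 0 < c) :
    Summable (fun n : ℕ => 1 / ((n:ℝ) + c) ^ 2) := by
  have sb : Summable (fun n : ℕ => 1 / ((n:ℝ) + 1) ^ 2) := by
    have h := Real.summable_one_div_nat_pow.mpr one_lt_two
    have := (summable_nat_add_iff 1).mpr h
    refine this.congr (fun n => ?_)
    push_cast; ring
  set m : ℝ := min c 1 with hm
  have hm0 : 0 < m := lt_min hc one_pos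
  refine Summable.of_nonneg_of_le (fun n => by positivity) (fun n => ?_)
    (sb.mul_left (1 / m ^ 2))
  have h1 : m * ((n:ℝ) + 1) ≤ (n:ℝ) + c := by
    have h2 : m ≤ 1 := min_le_right _ _
    have h3 : m ≤ c := min_le_left _ _
    nlinarith [Nat.cast_nonneg (α := ℝ) n]
  calc 1 / ((n:ℝ) + c) ^ 2 ≤ 1 / (m * ((n:ℝ) + 1)) ^ 2 := by
        apply one_div_le_one_div_of_le (by positivity)
        exact pow_le_pow_left₀ (by positivity) h1 2
    _ = 1 / m ^ 2 * (1 / ((n:ℝ) + 1) ^ 2) := by rw [mul_pow, one_div_mul_one_div]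

open MeasureTheory in
/-- **Thermal bound for the Ohmic bath (Eq. (32)).**
For `β, ω_c > 0` the integral `∫₀^∞ ω e^{-ω/ω_c} coth(βω/2) dω` converges and equals
`-ω_c² + (2/β²) Σ_{n≥0} (n + 1/(βω_c))⁻²`, where the series is the trigamma function
`Ψ'(1/(βω_c))`. -/
theorem ohmic_thermal_integral (β ωc : ℝ) (hβ : 0 < β) (hωc : 0 < ωc) :
    IntegrableOn
      (fun ω : ℝ => ω * Real.exp (-ω / ωc) * (Real.cosh (β * ω / 2) / Real.sinh (β * ω / 2)))
      (Set.Ioi 0) ∧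
    ∫ ω in Set.Ioi (0 : ℝ),
        ω * Real.exp (-ω / ωc) * (Real.cosh (β * ω / 2) / Real.sinh (β * ω / 2)) =
      -ωc ^ 2 + (2 / β ^ 2) * ∑' n : ℕ, 1 / ((n : ℝ) + 1 / (β * ωc)) ^ 2 := by
  set x : ℝ := 1 / (β * ωc) with hxdef
  have hx : 0 < x := by positivity
  set f : ℝ → ℝ := fun ω =>
    ω * Real.exp (-ω / ωc) * (Real.cosh (β * ω / 2) / Real.sinh (β * ω / 2)) with hfdef
  have hc : 0 < 1 / ωc := by positivity
  -- the base function and the series terms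
  set g0 : ℝ → ℝ := fun ω => ω * Real.exp (-(1 / ωc * ω)) with hg0def
  have ha : ∀ n : ℕ, 0 < 1 / ωc + ((n:ℝ) + 1) * β := fun n => by positivity
  set F : ℕ → ℝ → ℝ := fun n ω =>
    2 * (ω * Real.exp (-((1 / ωc + ((n:ℝ) + 1) * β) * ω))) with hFdef
  have hg0_int : IntegrableOn g0 (Set.Ioi 0) := integrableOn_id_mul_exp hc
  have hg0_val : ∫ ω in Set.Ioi (0:ℝ), g0 ω = ωc ^ 2 := by
    rw [hg0def, integral_id_mul_exp hc]; field_simp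
  have hF_int : ∀ n, IntegrableOn (F n) (Set.Ioi 0) := fun n =>
    (integrableOn_id_mul_exp (ha n)).const_mul 2
  have hF_val : ∀ n, ∫ ω in Set.Ioi (0:ℝ), F n ω
      = 2 / β ^ 2 * (1 / (((n:ℝ) + 1) + x) ^ 2) := by
    intro n
    rw [hFdef]
    simp only []
    rw [MeasureTheory.integral_const_mul, integral_id_mul_exp (ha n)]
    have he : 1 / ωc + ((n:ℝ) + 1) * β = β * (((n:ℝ) + 1) + x) := by
      rw [hxdef]; field_simp; ring
    rw [he, mul_pow]
    have h1 : ((n:ℝ) + 1 + x) ≠ 0 := by positivity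
    field_simp
  -- pointwise series representation on `Ioi 0`
  have hkey : ∀ ω ∈ Set.Ioi (0:ℝ), f ω = g0 ω + ∑' n, F n ω := by
    intro ω hω
    have hω0 : 0 < ω := hω
    have hβω2 : 0 < β * ω / 2 := by positivity
    have hFeq : ∀ n : ℕ, F n ω
        = 2 * (ω * Real.exp (-(1 / ωc * ω))) * Real.exp (-(2 * (β * ω / 2))) ^ (n + 1) := by
      intro n
      have h1 : Real.exp (-(2 * (β * ω / 2))) ^ (n + 1)
          = Real.exp (((n:ℝ) + 1) * -(2 * (β * ω / 2))) := by
        rw [← Real.exp_nat_mul]; congr 1; push_cast; ring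
      have h2 : Real.exp (-(1 / ωc * ω)) * Real.exp (((n:ℝ) + 1) * -(2 * (β * ω / 2)))
          = Real.exp (-((1 / ωc + ((n:ℝ) + 1) * β) * ω)) := by
        rw [← Real.exp_add]; congr 1; ring
      rw [hFdef]
      simp only []
      rw [h1, ← h2]
      ring
    rw [hfdef]
    simp only []
    rw [coth_tsum hβω2]
    have ht : ∑' n, F n ω
        = 2 * (ω * Real.exp (-(1 / ωc * ω))) * ∑' n : ℕ, Real.exp (-(2 * (β * ω / 2))) ^ (n + 1) := by
      rw [tsum_congr hFeq, tsum_mul_left]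
    rw [ht, hg0def]
    have hexp : Real.exp (-ω / ωc) = Real.exp (-(1 / ωc * ω)) := by
      congr 1; ring
    rw [hexp]
    ring
  -- integrability of `f`
  have hf_int : IntegrableOn f (Set.Ioi 0) := by
    have hmeas : AEStronglyMeasurable f (volume.restrict (Set.Ioi 0)) := by
      refine ContinuousOn.aestronglyMeasurable ?_ measurableSet_Ioi
      refine ContinuousOn.mul ?_ (ContinuousOn.div ?_ ?_ ?_)
      · exact (continuous_id.mul
          (Real.continuous_exp.comp (continuous_id.neg.div_const ωc))).continuousOn
      · exact (Real.continuous_cosh.comp ((continuous_const.mul continuous_id).div_const 2)).continuousOn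
      · exact (Real.continuous_sinh.comp ((continuous_const.mul continuous_id).div_const 2)).continuousOn
      · intro ω hω
        exact (Real.sinh_pos_iff.mpr (by have : (0:ℝ) < ω := hω; positivity)).ne'
    set g : ℝ → ℝ := fun ω => ω * Real.exp (-(1 / ωc * ω)) + 2 / β * Real.exp (-(1 / ωc * ω))
      with hgdef
    have hg_int : IntegrableOn g (Set.Ioi 0) := by
      refine hg0_int.add ?_
      refine IntegrableOn.congr_fun ((exp_neg_integrableOn_Ioi 0 hc).const_mul (2/β))
        (fun t ht => ?_) measurableSet_Ioi
      rw [neg_mul]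
    refine Integrable.mono' hg_int hmeas ?_
    filter_upwards [ae_restrict_mem measurableSet_Ioi] with ω hω
    have hω0 : 0 < ω := hω
    have hβω2 : 0 < β * ω / 2 := by positivity
    have hs : 0 < Real.sinh (β * ω / 2) := Real.sinh_pos_iff.mpr hβω2
    have hch : 0 < Real.cosh (β * ω / 2) := Real.cosh_pos _
    have hfnn : 0 ≤ f ω := by
      rw [hfdef]; positivity
    rw [Real.norm_eq_abs, abs_of_nonneg hfnn]
    have hle := coth_le hβω2
    have h2 : f ω ≤ ω * Real.exp (-ω / ωc) * (1 + 1 / (β * ω / 2)) := by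
      rw [hfdef]
      exact mul_le_mul_of_nonneg_left hle (by positivity)
    refine h2.trans_eq ?_
    rw [hgdef]
    have hβ' : β ≠ 0 := hβ.ne'
    have hω' : ω ≠ 0 := hω0.ne'
    have hexp : Real.exp (-ω / ωc) = Real.exp (-(1 / ωc * ω)) := by congr 1; ring
    rw [hexp]
    field_simp
  refine ⟨hf_int, ?_⟩
  -- summability of the norms of the series
  have hS1 : Summable (fun n : ℕ => 1 / (((n:ℝ) + 1) + x) ^ 2) := by
    have := summable_shift (c := 1 + x) (by linarith)
    refine this.congr (fun n => ?_)
    ring_nf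
  have hF_norm : ∀ n, ∫ ω in Set.Ioi (0:ℝ), ‖F n ω‖
      = 2 / β ^ 2 * (1 / (((n:ℝ) + 1) + x) ^ 2) := by
    intro n
    rw [← hF_val n]
    refine setIntegral_congr_fun measurableSet_Ioi (fun ω hω => ?_)
    have hω0 : 0 < ω := hω
    rw [Real.norm_eq_abs, abs_of_nonneg (by rw [hFdef]; positivity)]
  have hF_sum : Summable fun n => ∫ ω in Set.Ioi (0:ℝ), ‖F n ω‖ := by
    refine (hS1.mul_left (2 / β ^ 2)).congr (fun n => ?_)
    rw [hF_norm n]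
  -- the tsum function is integrable
  have htsum_int : Integrable (fun ω => ∑' n, F n ω) (volume.restrict (Set.Ioi 0)) := by
    refine (hf_int.sub hg0_int).congr ?_
    filter_upwards [ae_restrict_mem measurableSet_Ioi] with ω hω
    simp only [Pi.sub_apply]
    rw [hkey ω hω]; ring
  -- compute the integral
  have hstep : ∫ ω in Set.Ioi (0:ℝ), f ω
      = ∫ ω in Set.Ioi (0:ℝ), (g0 ω + ∑' n, F n ω) :=
    setIntegral_congr_fun measurableSet_Ioi hkey
  rw [hstep, integral_add hg0_int htsum_int,
    ← integral_tsum_of_summable_integral_norm (fun n => hF_int n) hF_sum, hg0_val]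
  have hL : ∑' n, ∫ ω in Set.Ioi (0:ℝ), F n ω
      = 2 / β ^ 2 * ∑' n : ℕ, 1 / (((n:ℝ) + 1) + x) ^ 2 := by
    rw [← tsum_mul_left]
    exact tsum_congr hF_val
  rw [hL]
  -- now deal with the right-hand side series
  have hS : Summable (fun n : ℕ => 1 / ((n:ℝ) + x) ^ 2) := summable_shift hx
  rw [hS.tsum_eq_zero_add]
  have hx2 : 1 / ((0:ℕ) + x) ^ 2 = β ^ 2 * ωc ^ 2 := by
    rw [hxdef]; push_cast; field_simp; ring
  rw [hx2]
  have hR : ∑' n : ℕ, 1 / (((n:ℕ) + 1 : ℝ) + x) ^ 2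
      = ∑' n : ℕ, 1 / (((n:ℝ) + 1) + x) ^ 2 := by
    exact tsum_congr (fun n => by push_cast; ring_nf)
  rw [show (fun n : ℕ => 1 / (((n + 1 : ℕ):ℝ) + x) ^ 2) = fun n : ℕ => 1 / (((n:ℝ) + 1) + x) ^ 2
      from funext (fun n => by push_cast; ring_nf)]
  have hβ2 : β ^ 2 ≠ 0 := by positivity
  field_simp
  ring
end
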